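/- Let b, c ∈ ℂ be such that neither 1 + b + 2c nor 1 + 2b + c is a non-positive integer. Then ₃F₂(2b + 2c, b, c; 1 + b + 2c, 1 + 2b + c; 1) = Γ(1+b+2c)·Γ(1+2b+c) / (Γ(1+2b+2c)·Γ(1+b)·Γ(1+c)), where a quotient of Gamma values with a denominator argument equal to a non-positive integer is interpreted as zero. (This two-parameter identity is a common specialization of Dixon's theorem and of the quadratically constrained 2-balanced Slater summation of ₃F₂(1).) -/

import Mathlib

noncomputable def poch (a : ℂ) (k : ℕ) : ℂ := Polynomial.eval a (ascPochhammer ℂ k)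

noncomputable def F32 (a b c d e : ℂ) : ℂ :=
  ∑' k : ℕ, (poch a k * poch b k * poch c k) / (poch d k * poch e k * (k.factorial : ℂ))

/-!
The series telescopes. Whenever `(x + a + 1)(x + b + 1)(x + c + 1) - (x + d)(x + e)(x + 1)` is the
constant `a b c`, i.e. `d + e = a + b + c + 2` and `d e = 1 + a + b + c + a b + b c + c a`, the
partial sum up to `n` is `(a + 1)ₙ (b + 1)ₙ (c + 1)ₙ / ((d)ₙ (e)ₙ n!)`; the overlap parameters
`(2b + 2c, b, c; 1 + b + 2c, 1 + 2b + c)` are of this kind. Since the Pochhammer parameters of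
numerator and denominator have equal sums, Euler's limit `Γ(s) = lim nˢ n! / (s)ₙ₊₁`, used in the
form `1/Γ(s) = lim (s)ₙ₊₁ / (nˢ n!)` (valid at the poles too, where both sides vanish), evaluates
the limit of the closed form. The series converges absolutely because its `(n + 1)`-st term is the
convergent closed form times `a b c / ((d + n)(e + n)(n + 1)) = O(n⁻³)`.
-/

open Filter Topology Asymptotics Finset Complex
open scoped Nat

lemma poch_zero (a : ℂ) : poch a 0 = 1 := by
  simp [poch]

lemma poch_succ_right (a : ℂ) (n : ℕ) : poch a (n + 1) = poch a n * (a + n) :=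
  ascPochhammer_succ_eval n a

lemma poch_succ_left (a : ℂ) (n : ℕ) : poch a (n + 1) = a * poch (a + 1) n := by
  simp [poch, ascPochhammer_succ_left, Polynomial.eval_comp]

lemma poch_one (n : ℕ) : poch 1 n = n ! :=
  ascPochhammer_eval_one ℂ n

lemma add_natCast_ne_zero {a : ℂ} (ha : ∀ m : ℕ, a ≠ -m) (n : ℕ) : a + n ≠ 0 :=
  fun h => ha n (eq_neg_of_add_eq_zero_left h)

lemma poch_ne_zero {a : ℂ} (ha : ∀ m : ℕ, a ≠ -m) (n : ℕ) : poch a n ≠ 0 := by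
  simp only [poch, ne_eq, ascPochhammer_eval_eq_zero_iff, not_exists, not_and]
  exact fun m _ hm => ha m (by rw [hm, neg_neg])

lemma prod_range_add_natCast (s : ℂ) (n : ℕ) : ∏ j ∈ range n, (s + j) = poch s n := by
  induction n with
  | zero => simp [poch_zero]
  | succ n ih => rw [prod_range_succ, ih, poch_succ_right]

namespace Complex

lemma GammaSeq_inv (s : ℂ) (n : ℕ) :
    (GammaSeq s n)⁻¹ = poch s (n + 1) / ((n : ℂ) ^ s * n !) := by
  rw [GammaSeq, inv_div, prod_range_add_natCast]

lemma tendsto_GammaSeq_inv (s : ℂ) :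
    Tendsto (fun n => (GammaSeq s n)⁻¹) atTop (𝓝 (Gamma s)⁻¹) := by
  by_cases hs : Gamma s = 0
  · obtain ⟨m, rfl⟩ := (Gamma_eq_zero_iff s).1 hs
    rw [hs, inv_zero]
    refine tendsto_const_nhds.congr' ?_
    filter_upwards [eventually_ge_atTop m] with n hn
    rw [GammaSeq_inv, ← prod_range_add_natCast,
      prod_eq_zero (mem_range.2 (Nat.lt_succ_of_le hn)) (neg_add_cancel _), zero_div]
  · exact (GammaSeq_tendsto_Gamma s).inv₀ hs

end Complex

lemma tendsto_poch_ratio {a b c d e f : ℂ} (habc : a + b + c = d + e + f)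
    (hd : ∀ m : ℕ, d ≠ -m) (he : ∀ m : ℕ, e ≠ -m) (hf : ∀ m : ℕ, f ≠ -m) :
    Tendsto (fun n => poch a n * poch b n * poch c n / (poch d n * poch e n * poch f n)) atTop
      (𝓝 (Gamma d * Gamma e * Gamma f / (Gamma a * Gamma b * Gamma c))) := by
  rw [← tendsto_add_atTop_iff_nat 1]
  have hlim := ((tendsto_GammaSeq_inv a).mul (tendsto_GammaSeq_inv b) |>.mul
    (tendsto_GammaSeq_inv c)).div ((tendsto_GammaSeq_inv d).mul (tendsto_GammaSeq_inv e) |>.mul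
    (tendsto_GammaSeq_inv f)) (by simp [Gamma_ne_zero, hd, he, hf])
  convert hlim.congr' ?_ using 2
  · simp only [div_eq_mul_inv, mul_inv, inv_inv]
    ring
  · filter_upwards [eventually_ne_atTop 0] with n hn
    have hn' : (n : ℂ) ≠ 0 := Nat.cast_ne_zero.2 hn
    have hpow : (n : ℂ) ^ a * (n : ℂ) ^ b * (n : ℂ) ^ c =
        (n : ℂ) ^ d * (n : ℂ) ^ e * (n : ℂ) ^ f := by
      rw [← cpow_add _ _ hn', ← cpow_add _ _ hn', habc, cpow_add _ _ hn', cpow_add _ _ hn']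
    have hpow_ne (s : ℂ) : (n : ℂ) ^ s ≠ 0 := by simp [cpow_eq_zero_iff, hn']
    have hfac : (n ! : ℂ) ≠ 0 := Nat.cast_ne_zero.2 n.factorial_ne_zero
    simp only [Pi.div_apply, GammaSeq_inv]
    field_simp [hpow_ne, poch_ne_zero hd, poch_ne_zero he, poch_ne_zero hf]
    linear_combination -(poch a (n + 1) * poch b (n + 1) * poch c (n + 1)) * hpow

namespace F32

noncomputable def term (a b c d e : ℂ) (k : ℕ) : ℂ :=
  poch a k * poch b k * poch c k / (poch d k * poch e k * k !)

noncomputable def closedPartialSum (a b c d e : ℂ) (n : ℕ) : ℂ :=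
  poch (a + 1) n * poch (b + 1) n * poch (c + 1) n / (poch d n * poch e n * n !)

variable {a b c d e : ℂ}

lemma term_succ (n : ℕ) :
    term a b c d e (n + 1) =
      closedPartialSum a b c d e n * (a * b * c / ((d + n) * (e + n) * (n + 1))) := by
  rw [term, closedPartialSum, div_mul_div_comm, poch_succ_left a, poch_succ_left b,
    poch_succ_left c, poch_succ_right d, poch_succ_right e, Nat.factorial_succ, Nat.cast_mul,
    Nat.cast_succ]
  congr 1 <;> ring

lemma closedPartialSum_succ (n : ℕ) :
    closedPartialSum a b c d e (n + 1) = closedPartialSum a b c d e n *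
      ((a + 1 + n) * (b + 1 + n) * (c + 1 + n) / ((d + n) * (e + n) * (n + 1))) := by
  rw [closedPartialSum, closedPartialSum, div_mul_div_comm, poch_succ_right, poch_succ_right,
    poch_succ_right, poch_succ_right, poch_succ_right, Nat.factorial_succ, Nat.cast_mul,
    Nat.cast_succ]
  congr 1 <;> ring

lemma closedPartialSum_succ_sub (hsum : d + e = a + b + c + 2)
    (hprod : d * e = 1 + a + b + c + a * b + b * c + c * a)
    (hd : ∀ m : ℕ, d ≠ -m) (he : ∀ m : ℕ, e ≠ -m) (n : ℕ) :
    closedPartialSum a b c d e (n + 1) - closedPartialSum a b c d e n = term a b c d e (n + 1) := by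
  have hfactor : (a + 1 + n) * (b + 1 + n) * (c + 1 + n) / ((d + n) * (e + n) * (n + 1)) - 1 =
      a * b * c / ((d + n) * (e + n) * (n + 1)) := by
    rw [div_sub_one (by simp [add_natCast_ne_zero hd, add_natCast_ne_zero he,
      Nat.cast_add_one_ne_zero])]
    congr 1
    linear_combination (-(n : ℂ) ^ 2 - n) * hsum + (-(n : ℂ) - 1) * hprod
  rw [closedPartialSum_succ, term_succ, ← hfactor]
  ring

lemma sum_range_succ_term (hsum : d + e = a + b + c + 2)
    (hprod : d * e = 1 + a + b + c + a * b + b * c + c * a)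
    (hd : ∀ m : ℕ, d ≠ -m) (he : ∀ m : ℕ, e ≠ -m) (n : ℕ) :
    ∑ k ∈ range (n + 1), term a b c d e k = closedPartialSum a b c d e n := by
  induction n with
  | zero => simp [term, closedPartialSum, poch_zero]
  | succ n ih =>
    rw [sum_range_succ, ih, ← closedPartialSum_succ_sub hsum hprod hd he, add_sub_cancel]

lemma tendsto_closedPartialSum (hsum : d + e = a + b + c + 2)
    (hd : ∀ m : ℕ, d ≠ -m) (he : ∀ m : ℕ, e ≠ -m) :
    Tendsto (closedPartialSum a b c d e) atTop
      (𝓝 (Gamma d * Gamma e / (Gamma (a + 1) * Gamma (b + 1) * Gamma (c + 1)))) := by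
  have h := tendsto_poch_ratio (a := a + 1) (b := b + 1) (c := c + 1) (f := 1)
    (by linear_combination -hsum) hd he fun m => by exact_mod_cast (by omega : (1 : ℤ) ≠ -m)
  simp only [poch_one, Gamma_one, mul_one] at h
  exact h

lemma summable_term (hsum : d + e = a + b + c + 2)
    (hd : ∀ m : ℕ, d ≠ -m) (he : ∀ m : ℕ, e ≠ -m) : Summable (term a b c d e) := by
  rw [← summable_nat_add_iff 1]
  have hbounded : (fun n => closedPartialSum a b c d e n * ((n : ℂ) / (n + d)) *
      ((n : ℂ) / (n + e)) * ((n : ℂ) / (n + 1))) =O[atTop] (fun _ => (1 : ℝ)) :=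
    ((((tendsto_closedPartialSum hsum hd he).mul (tendsto_natCast_div_add_atTop d)).mul
      (tendsto_natCast_div_add_atTop e)).mul (tendsto_natCast_div_add_atTop 1)).isBigO_one ℝ
  have hcube : (fun n : ℕ => a * b * c * ((n : ℂ) ^ 3)⁻¹) =O[atTop] (fun n => ((n : ℝ) ^ 3)⁻¹) :=
    (isBigO_const_mul_self _ _ _).trans (isBigO_of_le _ fun n => by simp)
  refine summable_of_isBigO_nat ((Real.summable_nat_pow_inv (p := 3)).2 (by norm_num)) ?_
  refine (hbounded.mul hcube).congr' ?_ (.of_eq (by simp))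
  filter_upwards [eventually_ne_atTop 0] with n hn
  have hn' : (n : ℂ) ≠ 0 := Nat.cast_ne_zero.2 hn
  have hdn : (n : ℂ) + d ≠ 0 := add_comm d n ▸ add_natCast_ne_zero hd n
  have hen : (n : ℂ) + e ≠ 0 := add_comm e n ▸ add_natCast_ne_zero he n
  have hn1 : (n : ℂ) + 1 ≠ 0 := Nat.cast_add_one_ne_zero n
  rw [term_succ, add_comm d, add_comm e]
  field_simp

theorem hasSum_term (hsum : d + e = a + b + c + 2)
    (hprod : d * e = 1 + a + b + c + a * b + b * c + c * a)
    (hd : ∀ m : ℕ, d ≠ -m) (he : ∀ m : ℕ, e ≠ -m) :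
    HasSum (term a b c d e)
      (Gamma d * Gamma e / (Gamma (a + 1) * Gamma (b + 1) * Gamma (c + 1))) := by
  refine (summable_term hsum hd he).hasSum_iff_tendsto_nat.2 ?_
  rw [← tendsto_add_atTop_iff_nat 1]
  simpa only [sum_range_succ_term hsum hprod hd he] using tendsto_closedPartialSum hsum hd he

end F32

/-- The two-parameter overlap formula (eq:overlap1). -/
theorem dixon_slater_overlap
    (b c : ℂ)
    (hd : ∀ m : ℕ, 1 + b + 2 * c ≠ -(m : ℂ))
    (he : ∀ m : ℕ, 1 + 2 * b + c ≠ -(m : ℂ)) :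
    F32 (2 * b + 2 * c) b c (1 + b + 2 * c) (1 + 2 * b + c)
      = Complex.Gamma (1 + b + 2 * c) * Complex.Gamma (1 + 2 * b + c) /
          (Complex.Gamma (1 + 2 * b + 2 * c) * Complex.Gamma (1 + b) * Complex.Gamma (1 + c)) := by
  have h := (F32.hasSum_term (a := 2 * b + 2 * c) (b := b) (c := c)
    (by ring) (by ring) hd he).tsum_eq
  rw [show 2 * b + 2 * c + 1 = 1 + 2 * b + 2 * c by ring, add_comm b, add_comm c] at h
  exact h
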